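/- FKG-type inequality for partial sums (Lemma 4.4 of the paper): Let k ≥ 1 and let f₁, f₂ : ℝ^k → [0,∞) be bounded measurable functions. For i ∈ {1,2} define f̃ᵢ(u₁,…,u_k) := fᵢ(u₁, u₁+u₂, …, u₁+⋯+u_k). If f̃₁ and f̃₂ are both nondecreasing with respect to the coordinatewise partial order on ℝ^k (that is, sⱼ ≤ tⱼ for all j ≤ k implies f̃ᵢ(s) ≤ f̃ᵢ(t)), then E[f₁(S₁,S₂,…,S_k)·f₂(S₁,S₂,…,S_k)] ≥ E[f₁(S₁,S₂,…,S_k)]·E[f₂(S₁,S₂,…,S_k)]. -/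

import Mathlib

/-!
Coordinatewise monotone functions of independent real coordinates are positively correlated
(Harris–FKG). On a line this is Chebyshev's inequality, obtained by integrating
`(f x - f y) * (g x - g y) ≥ 0` against `μ ⊗ μ`; it passes to finite products by integrating out
one coordinate at a time. The vector `(S₁, …, S_k)` is the image of the independent vector
`(X₁, …, X_k)` under `u ↦ (u₁, u₁ + u₂, …)`, and composing with this map makes `f₁` and `f₂`
coordinatewise monotone.
-/

open MeasureTheory ProbabilityTheory Filter Finset Real

noncomputable section

variable {Ω : Type*} [MeasurableSpace Ω]

/-- Partial sums: `pSum X n = X 0 + ⋯ + X (n-1)` (the walk `S_n`). -/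
def pSum (X : ℕ → Ω → ℝ) (n : ℕ) (ω : Ω) : ℝ := ∑ i ∈ Finset.range n, X i ω

/-- Running maximum `S̄_n = max_{1 ≤ m ≤ n} S_m`. -/
def pMax (X : ℕ → Ω → ℝ) (n : ℕ) (ω : Ω) : ℝ := ⨆ j : Fin n, pSum X (j.1 + 1) ω

/-- Running minimum `S̲_n = min_{1 ≤ m ≤ n} S_m`. -/
def pMin (X : ℕ → Ω → ℝ) (n : ℕ) (ω : Ω) : ℝ := ⨅ j : Fin n, pSum X (j.1 + 1) ω

/-- `τ_a = inf {k ≥ 1 : S_k ≥ a}`. -/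
def tauGe (X : ℕ → Ω → ℝ) (a : ℝ) (ω : Ω) : ℕ := sInf {k | 1 ≤ k ∧ a ≤ pSum X k ω}

/-- `τ_a⁻ = inf {k ≥ 1 : S_k ≤ a}`. -/
def tauLe (X : ℕ → Ω → ℝ) (a : ℝ) (ω : Ω) : ℕ := sInf {k | 1 ≤ k ∧ pSum X k ω ≤ a}

/-- `τ₀⁺ = inf {k ≥ 1 : S_k > 0}`. -/
def tauPos (X : ℕ → Ω → ℝ) (ω : Ω) : ℕ := sInf {k | 1 ≤ k ∧ 0 < pSum X k ω}

/-- `τ^{S̄ - S}_a = inf {k ≥ 1 : S̄_k - S_k ≥ a}`. -/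
def tauDown (X : ℕ → Ω → ℝ) (a : ℝ) (ω : Ω) : ℕ :=
  sInf {k | 1 ≤ k ∧ a ≤ pMax X k ω - pSum X k ω}

/-- `H_j^S = ∑_{i=1}^j e^{S_i - S_j}`. -/
def HS (X : ℕ → Ω → ℝ) (j : ℕ) (ω : Ω) : ℝ :=
  ∑ i ∈ Finset.Icc 1 j, Real.exp (pSum X i ω - pSum X j ω)

/-- Strict ascending ladder epochs. -/
def ladder (X : ℕ → Ω → ℝ) : ℕ → Ω → ℕ
  | 0 => fun _ => 0
  | (k + 1) => fun ω =>
      sInf {i | ladder X k ω < i ∧ pSum X (ladder X k ω) ω < pSum X i ω}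

/-- `M(u) = P(sup_{s ≤ 1} 𝔪_s > u) = 2 ∑_{k ≥ 1} (-1)^{k+1} e^{-k² u² / 2}`. -/
def meanderTail (u : ℝ) : ℝ :=
  2 * ∑' k : ℕ, (-1 : ℝ) ^ k * Real.exp (-((k + 1 : ℝ) ^ 2 * u ^ 2) / 2)

/-- `f(u) = (2/√u) M(1/√(uσ²)) - (1/2) ∫_u^∞ y^{-3/2} M(1/√(yσ²)) dy`. -/
def fBM (σ u : ℝ) : ℝ :=
  (2 / Real.sqrt u) * meanderTail (1 / Real.sqrt (u * σ ^ 2))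
    - (1 / 2) * ∫ y in Set.Ioi u, y ^ (-(3 : ℝ) / 2) * meanderTail (1 / Real.sqrt (y * σ ^ 2))

/-- `ρ(c) = (cσ/√(2π)) ∫₀^∞ e^{-cσ²u/2} f(u) du`. -/
def rhoBM (σ c : ℝ) : ℝ :=
  (c * σ / Real.sqrt (2 * Real.pi)) *
    ∫ u in Set.Ioi (0 : ℝ), Real.exp (-(c * σ ^ 2 * u) / 2) * fBM σ u

end

section PositiveAssociation

variable {α β : Type*} [MeasurableSpace α] [MeasurableSpace β]

def PositivelyAssociated [Preorder α] (μ : Measure α) : Prop :=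
  ∀ ⦃f g : α → ℝ⦄, Measurable f → Measurable g → Monotone f → Monotone g →
    (∃ C, ∀ x, ‖f x‖ ≤ C) → (∃ C, ∀ x, ‖g x‖ ≤ C) →
    (∫ x, f x ∂μ) * (∫ x, g x ∂μ) ≤ ∫ x, f x * g x ∂μ

lemma Measurable.integrable_of_norm_le {μ : Measure α} [IsFiniteMeasure μ] {f : α → ℝ}
    (hf : Measurable f) {C : ℝ} (hC : ∀ x, ‖f x‖ ≤ C) : Integrable f μ :=
  .of_bound hf.aestronglyMeasurable C (.of_forall hC)

theorem positivelyAssociated_of_linearOrder [LinearOrder α] (μ : Measure α)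
    [IsProbabilityMeasure μ] : PositivelyAssociated μ := by
  intro f g hf hg hfm hgm ⟨C, hC⟩ ⟨D, hD⟩
  have hfi : Integrable f μ := hf.integrable_of_norm_le hC
  have hgi : Integrable g μ := hg.integrable_of_norm_le hD
  have hfgi : Integrable (fun x => f x * g x) μ :=
    hgi.bdd_mul hf.aestronglyMeasurable (.of_forall hC)
  have hnonneg : 0 ≤ ∫ z, (f z.1 - f z.2) * (g z.1 - g z.2) ∂μ.prod μ := by
    refine integral_nonneg fun z => ?_
    rcases le_total z.1 z.2 with h | h
    · exact mul_nonneg_of_nonpos_of_nonpos (sub_nonpos.2 (hfm h)) (sub_nonpos.2 (hgm h))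
    · exact mul_nonneg (sub_nonneg.2 (hfm h)) (sub_nonneg.2 (hgm h))
  have hexpand : ∫ z, (f z.1 - f z.2) * (g z.1 - g z.2) ∂μ.prod μ =
      2 * (∫ x, f x * g x ∂μ - (∫ x, f x ∂μ) * ∫ x, g x ∂μ) := by
    have hring : (fun z : α × α => (f z.1 - f z.2) * (g z.1 - g z.2)) =
        fun z => (f z.1 * g z.1 + f z.2 * g z.2) - (f z.1 * g z.2 + g z.1 * f z.2) := by
      ext; ring
    have hdiag : Integrable (fun z : α × α => f z.1 * g z.1 + f z.2 * g z.2) (μ.prod μ) :=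
      (hfgi.comp_fst μ).add (hfgi.comp_snd μ)
    have hcross : Integrable (fun z : α × α => f z.1 * g z.2 + g z.1 * f z.2) (μ.prod μ) :=
      (hfi.mul_prod hgi).add (hgi.mul_prod hfi)
    rw [hring, integral_sub hdiag hcross, integral_add (hfgi.comp_fst μ) (hfgi.comp_snd μ),
      integral_add (hfi.mul_prod hgi) (hgi.mul_prod hfi),
      integral_fun_fst (fun x => f x * g x), integral_fun_snd (fun x => f x * g x),
      integral_prod_mul, integral_prod_mul]
    simp only [probReal_univ, one_smul]
    ring
  linarith

theorem positivelyAssociated_dirac [Preorder α] (a : α) :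
    PositivelyAssociated (Measure.dirac a) := by
  intro f g hf hg _ _ _ _
  rw [integral_dirac' _ _ hf.stronglyMeasurable, integral_dirac' _ _ hg.stronglyMeasurable,
    integral_dirac' (fun x => f x * g x) _ (hf.mul hg).stronglyMeasurable]

theorem PositivelyAssociated.map [Preorder α] [Preorder β] {μ : Measure α}
    (hμ : PositivelyAssociated μ) {Φ : α → β} (hΦ : Measurable Φ) (hΦm : Monotone Φ) :
    PositivelyAssociated (μ.map Φ) := by
  intro f g hf hg hfm hgm hfC hgC
  rw [integral_map hΦ.aemeasurable hf.aestronglyMeasurable,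
    integral_map hΦ.aemeasurable hg.aestronglyMeasurable,
    integral_map (f := fun x => f x * g x) hΦ.aemeasurable
      (hf.mul hg).aestronglyMeasurable]
  exact hμ (hf.comp hΦ) (hg.comp hΦ) (hfm.comp hΦm) (hgm.comp hΦm)
    (hfC.imp fun _ h x => h (Φ x)) (hgC.imp fun _ h x => h (Φ x))

lemma Monotone.integral_prod_right [Preorder α] [Preorder β] {ν : Measure β} [IsFiniteMeasure ν]
    {f : α × β → ℝ} (hf : Measurable f) (hfm : Monotone f) {C : ℝ} (hC : ∀ z, ‖f z‖ ≤ C) :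
    Monotone fun t => ∫ b, f (t, b) ∂ν := fun t t' htt' =>
  integral_mono ((hf.comp measurable_prodMk_left).integrable_of_norm_le fun b => hC (t, b))
    ((hf.comp measurable_prodMk_left).integrable_of_norm_le fun b => hC (t', b))
    fun _ => hfm (Prod.mk_le_mk.2 ⟨htt', le_rfl⟩)

theorem PositivelyAssociated.prod [Preorder α] [Preorder β] {μ : Measure α} {ν : Measure β}
    [IsProbabilityMeasure μ] [IsProbabilityMeasure ν]
    (hμ : PositivelyAssociated μ) (hν : PositivelyAssociated ν) :
    PositivelyAssociated (μ.prod ν) := by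
  intro f g hf hg hfm hgm ⟨C, hC⟩ ⟨D, hD⟩
  set F := fun t => ∫ b, f (t, b) ∂ν
  set G := fun t => ∫ b, g (t, b) ∂ν
  have hF : Measurable F := hf.stronglyMeasurable.integral_prod_right'.measurable
  have hG : Measurable G := hg.stronglyMeasurable.integral_prod_right'.measurable
  have hFC : ∀ t, ‖F t‖ ≤ C := fun t => by
    simpa using norm_integral_le_of_norm_le_const (μ := ν) (.of_forall fun b => hC (t, b))
  have hGD : ∀ t, ‖G t‖ ≤ D := fun t => by
    simpa using norm_integral_le_of_norm_le_const (μ := ν) (.of_forall fun b => hD (t, b))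
  have hFm : Monotone F := hfm.integral_prod_right hf hC
  have hGm : Monotone G := hgm.integral_prod_right hg hD
  have hfiber : ∀ t, F t * G t ≤ ∫ b, f (t, b) * g (t, b) ∂ν := fun t =>
    hν (hf.comp measurable_prodMk_left) (hg.comp measurable_prodMk_left)
      (fun _ _ h => hfm (Prod.mk_le_mk.2 ⟨le_rfl, h⟩))
      (fun _ _ h => hgm (Prod.mk_le_mk.2 ⟨le_rfl, h⟩)) ⟨C, fun b => hC (t, b)⟩
      ⟨D, fun b => hD (t, b)⟩
  have hfgi : Integrable (fun z => f z * g z) (μ.prod ν) :=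
    (hg.integrable_of_norm_le hD).bdd_mul hf.aestronglyMeasurable (.of_forall hC)
  calc (∫ z, f z ∂μ.prod ν) * ∫ z, g z ∂μ.prod ν = (∫ t, F t ∂μ) * ∫ t, G t ∂μ := by
        rw [integral_prod f (hf.integrable_of_norm_le hC),
          integral_prod g (hg.integrable_of_norm_le hD)]
    _ ≤ ∫ t, F t * G t ∂μ := hμ hF hG hFm hGm ⟨C, hFC⟩ ⟨D, hGD⟩
    _ ≤ ∫ t, ∫ b, f (t, b) * g (t, b) ∂ν ∂μ :=
        integral_mono ((hG.integrable_of_norm_le hGD).bdd_mul hF.aestronglyMeasurable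
          (.of_forall hFC)) hfgi.integral_prod_left hfiber
    _ = ∫ z, f z * g z ∂μ.prod ν := (integral_prod _ hfgi).symm

theorem PositivelyAssociated.pi {n : ℕ} {α : Fin n → Type*} [∀ i, MeasurableSpace (α i)]
    [∀ i, Preorder (α i)] {μ : ∀ i, Measure (α i)} [∀ i, IsProbabilityMeasure (μ i)]
    (hμ : ∀ i, PositivelyAssociated (μ i)) : PositivelyAssociated (Measure.pi μ) := by
  induction n with
  | zero => rw [Measure.pi_of_empty]; exact positivelyAssociated_dirac _
  | succ n ih =>
    rw [← (measurePreserving_piFinSuccAbove μ 0).symm.map_eq]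
    refine ((hμ 0).prod (ih fun j => hμ _)).map (MeasurableEquiv.measurable _) ?_
    intro p q hpq
    show Fin.insertNth 0 p.1 p.2 ≤ Fin.insertNth 0 q.1 q.2
    exact Fin.insertNth_le_iff.2 ⟨by rw [Fin.insertNth_apply_same]; exact hpq.1,
      fun j => by dsimp only; rw [Fin.insertNth_apply_succAbove]; exact hpq.2 j⟩

theorem PositivelyAssociated.integral_comp_mul_integral_comp_le [Preorder α] {Ω : Type*}
    [MeasurableSpace Ω] {μ : Measure Ω} {Y : Ω → α} (hY : Measurable Y)
    (h : PositivelyAssociated (μ.map Y)) {f g : α → ℝ} (hf : Measurable f) (hg : Measurable g)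
    (hfm : Monotone f) (hgm : Monotone g) (hfC : ∃ C, ∀ x, ‖f x‖ ≤ C)
    (hgC : ∃ C, ∀ x, ‖g x‖ ≤ C) :
    (∫ ω, f (Y ω) ∂μ) * (∫ ω, g (Y ω) ∂μ) ≤ ∫ ω, f (Y ω) * g (Y ω) ∂μ := by
  have := h hf hg hfm hgm hfC hgC
  rwa [integral_map hY.aemeasurable hf.aestronglyMeasurable,
    integral_map hY.aemeasurable hg.aestronglyMeasurable,
    integral_map (f := fun x => f x * g x) hY.aemeasurable (hf.mul hg).aestronglyMeasurable]
    at this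

theorem iIndepFun.positivelyAssociated_map {Ω : Type*} [MeasurableSpace Ω] {μ : Measure Ω}
    [IsProbabilityMeasure μ] {n : ℕ} {X : Fin n → Ω → ℝ} (hX : ∀ i, Measurable (X i))
    (hindep : iIndepFun X μ) : PositivelyAssociated (μ.map fun ω i => X i ω) := by
  have (i : Fin n) := Measure.isProbabilityMeasure_map (μ := μ) (hX i).aemeasurable
  rw [hindep.map_fun_eq_pi_map fun i => (hX i).aemeasurable]
  exact .pi fun i => positivelyAssociated_of_linearOrder _

end PositiveAssociation

theorem fkg_partial_sums_general {Ω : Type*} [MeasurableSpace Ω] (μ : Measure Ω) [IsProbabilityMeasure μ]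
    (X : ℕ → Ω → ℝ) (hmeas : ∀ i, Measurable (X i))
    (hindep : iIndepFun X μ)
    (k : ℕ) (f₁ f₂ : (Fin k → ℝ) → ℝ)
    (hf₁meas : Measurable f₁) (hf₂meas : Measurable f₂)
    (hf₁bdd : ∃ C, ∀ x, f₁ x ≤ C) (hf₂bdd : ∃ C, ∀ x, f₂ x ≤ C)
    (hf₁nonneg : ∀ x, 0 ≤ f₁ x) (hf₂nonneg : ∀ x, 0 ≤ f₂ x)
    (hmono₁ : Monotone fun u : Fin k → ℝ => f₁ fun j => ∑ i ∈ Finset.Iic j, u i)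
    (hmono₂ : Monotone fun u : Fin k → ℝ => f₂ fun j => ∑ i ∈ Finset.Iic j, u i) :
    (∫ ω, f₁ (fun j : Fin k => pSum X (j.1 + 1) ω) ∂μ) *
        (∫ ω, f₂ (fun j : Fin k => pSum X (j.1 + 1) ω) ∂μ) ≤
      ∫ ω, f₁ (fun j : Fin k => pSum X (j.1 + 1) ω) *
        f₂ (fun j : Fin k => pSum X (j.1 + 1) ω) ∂μ := by
  set Y : Ω → Fin k → ℝ := fun ω i => X i ω
  set T : (Fin k → ℝ) → Fin k → ℝ := fun u j => ∑ i ∈ Iic j, u i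
  have hY : Measurable Y := measurable_pi_lambda _ fun i => hmeas i
  have hT : Measurable T := measurable_pi_lambda _ fun j => Finset.measurable_sum _ fun i _ =>
    measurable_pi_apply i
  have hpSum : ∀ ω, (fun j : Fin k => pSum X (j.1 + 1) ω) = T (Y ω) := fun ω => funext fun j => by
    rw [pSum, Nat.range_succ_eq_Iic, ← Fin.map_valEmbedding_Iic, sum_map]; rfl
  have hassoc : PositivelyAssociated (μ.map Y) :=
    iIndepFun.positivelyAssociated_map (fun i => hmeas i) (hindep.precomp Fin.val_injective)
  have hbdd : ∀ {f : (Fin k → ℝ) → ℝ}, (∀ x, 0 ≤ f x) → (∃ C, ∀ x, f x ≤ C) →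
      ∃ C, ∀ x, ‖f (T x)‖ ≤ C := fun hf0 hfC =>
    hfC.imp fun _ hC x => (Real.norm_of_nonneg (hf0 _)).trans_le (hC _)
  simp only [hpSum]
  exact hassoc.integral_comp_mul_integral_comp_le hY (hf₁meas.comp hT) (hf₂meas.comp hT)
    hmono₁ hmono₂ (hbdd hf₁nonneg hf₁bdd) (hbdd hf₂nonneg hf₂bdd)

theorem fkg_partial_sums {Ω : Type*} [MeasurableSpace Ω] (μ : Measure Ω) [IsProbabilityMeasure μ]
    (X : ℕ → Ω → ℝ) (hmeas : ∀ i, Measurable (X i))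
    (hindep : iIndepFun X μ)
    (hident : ∀ i, IdentDistrib (X i) (X 0) μ μ)
    (k : ℕ) (hk : 1 ≤ k) (f₁ f₂ : (Fin k → ℝ) → ℝ)
    (hf₁meas : Measurable f₁) (hf₂meas : Measurable f₂)
    (hf₁bdd : ∃ C, ∀ x, f₁ x ≤ C) (hf₂bdd : ∃ C, ∀ x, f₂ x ≤ C)
    (hf₁nonneg : ∀ x, 0 ≤ f₁ x) (hf₂nonneg : ∀ x, 0 ≤ f₂ x)
    (hmono₁ : Monotone fun u : Fin k → ℝ => f₁ fun j => ∑ i ∈ Finset.Iic j, u i)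
    (hmono₂ : Monotone fun u : Fin k → ℝ => f₂ fun j => ∑ i ∈ Finset.Iic j, u i) :
    (∫ ω, f₁ (fun j : Fin k => pSum X (j.1 + 1) ω) ∂μ) *
        (∫ ω, f₂ (fun j : Fin k => pSum X (j.1 + 1) ω) ∂μ) ≤
      ∫ ω, f₁ (fun j : Fin k => pSum X (j.1 + 1) ω) *
        f₂ (fun j : Fin k => pSum X (j.1 + 1) ω) ∂μ :=
  fkg_partial_sums_general μ X hmeas hindep k f₁ f₂ hf₁meas hf₂meas hf₁bdd hf₂bdd hf₁nonneg
    hf₂nonneg hmono₁ hmono₂
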